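/- arXiv:1802.09931 — 8 statements merged into one kernel-verified Lean document; each statement's English description precedes it below -/
import Mathlib

section
/- Let S_1, …, S_n be locally compact second countable groups, and for each i let (Y_i, ν_i) be a σ-finite standard measure space equipped with a measurable, measure-class-preserving S_i-action that is metrically ergodic. Then the coordinatewise product action of S_1 × ⋯ × S_n on (Y_1 × ⋯ × Y_n, ν_1 × ⋯ × ν_n) is metrically ergodic. -/
open MeasureTheory TopologicalSpace

/-- An action of a topological group `S` on a measure space `(Y, ν)` is *metrically ergodic*
if for every separable metric space `V` equipped with a continuous `S`-action by isometries,
every measurable `S`-equivariant map `Y → V` is essentially constant. -/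
def MetricallyErgodic (S : Type*) [Group S] [TopologicalSpace S]
    (Y : Type*) [MeasurableSpace Y] [MulAction S Y] (ν : Measure Y) : Prop :=
  ∀ (V : Type) [MetricSpace V] [MeasurableSpace V] [BorelSpace V] [MulAction S V],
    SeparableSpace V →
    Continuous (fun p : S × V => p.1 • p.2) →
    (∀ s : S, Isometry fun v : V => s • v) →
    ∀ f : Y → V, Measurable f →
      (∀ s : S, ∀ᵐ y ∂ν, f (s • y) = s • f y) →
      ∃ v : V, ∀ᵐ y ∂ν, f y = v


/-!
By induction on `n` it suffices to treat two factors `G₁ ↷ Y₁` and `G₂ ↷ Y₂`. For a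
`G₁ × G₂`-equivariant `f : Y₁ × Y₂ → V`, the slice map `y₁ ↦ f (y₁, ·)` is a `G₁`-equivariant
measurable map into the space `L⁰(Y₂, V)` of a.e.-classes with the metric of convergence in measure.
This space is separable because `Y₂` is countably generated, and `G₁` acts on it by isometries,
continuously because `G₁` is first countable (dominated convergence). Metric ergodicity of `G₁`
makes almost every slice equal to a single `g : Y₂ → V`; since `G₂` preserves the measure class of
`Y₂`, this `g` is `G₂`-equivariant, hence essentially constant by metric ergodicity of `G₂`.
-/

open Filter Topology ENNReal

lemma ENNReal.min_one_add_le (a b : ℝ≥0∞) : min 1 (a + b) ≤ min 1 a + min 1 b := by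
  rcases le_total 1 a with ha | ha
  · exact (min_le_left _ _).trans (le_add_right (le_min le_rfl ha))
  rcases le_total 1 b with hb | hb
  · exact (min_le_left _ _).trans (le_add_left (le_min le_rfl hb))
  · rw [min_eq_right ha, min_eq_right hb]
    exact min_le_right _ _

theorem measurable_of_measurable_edist {α Z : Type*} [MeasurableSpace α] [PseudoEMetricSpace Z]
    [SeparableSpace Z] [MeasurableSpace Z] [BorelSpace Z] {F : α → Z}
    (h : ∀ z, Measurable fun a => edist (F a) z) : Measurable F := by
  refine measurable_of_isClosed fun C hC => ?_
  obtain ⟨T, hTC, hTc, hCT⟩ := (IsSeparable.of_separableSpace C).exists_countable_dense_subset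
  have hC' : F ⁻¹' C = {a | Metric.infEDist (F a) T = 0} := by
    ext a
    simp only [Set.mem_preimage, Set.mem_ofPred_eq, ← Metric.mem_closure_iff_infEDist_zero]
    exact ⟨fun ha => hCT ha, fun ha => hC.closure_subset_iff.2 hTC ha⟩
  rw [hC']
  exact measurableSet_eq_fun (Measurable.biInf T hTc fun z _ => h z) measurable_const

theorem IsIsometricSMul.continuousSMul {G Z : Type*} [TopologicalSpace G] [PseudoEMetricSpace Z]
    [SMul G Z] [IsIsometricSMul G Z] (h : ∀ z : Z, Continuous fun g : G => g • z) :
    ContinuousSMul G Z := by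
  refine ⟨continuous_iff_continuousAt.2 fun p => tendsto_iff_edist_tendsto_0.2 ?_⟩
  have hlim : Tendsto (fun q : G × Z => edist q.2 p.2 + edist (q.1 • p.2) (p.1 • p.2)) (𝓝 p)
      (𝓝 0) := by
    simpa using (tendsto_iff_edist_tendsto_0.1 (continuous_snd.tendsto p)).add
      (tendsto_iff_edist_tendsto_0.1 ((h p.2).tendsto p.1 |>.comp (continuous_fst.tendsto p)))
  refine tendsto_of_tendsto_of_tendsto_of_le_of_le tendsto_const_nhds hlim (fun _ => zero_le)
    fun q => ?_
  calc edist (q.1 • q.2) (p.1 • p.2)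
      ≤ edist (q.1 • q.2) (q.1 • p.2) + edist (q.1 • p.2) (p.1 • p.2) := edist_triangle _ _ _
    _ = edist q.2 p.2 + edist (q.1 • p.2) (p.1 • p.2) := by rw [edist_smul_left]

instance Prod.mulActionProd {G₁ G₂ Y₁ Y₂ : Type*} [Monoid G₁] [Monoid G₂] [MulAction G₁ Y₁]
    [MulAction G₂ Y₂] : MulAction (G₁ × G₂) (Y₁ × Y₂) where
  smul g y := (g.1 • y.1, g.2 • y.2)
  one_smul _ := Prod.ext (one_smul _ _) (one_smul _ _)
  mul_smul _ _ _ := Prod.ext (mul_smul _ _ _) (mul_smul _ _ _)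

@[simp]
lemma Prod.smul_prod_def {G₁ G₂ Y₁ Y₂ : Type*} [Monoid G₁] [Monoid G₂] [MulAction G₁ Y₁]
    [MulAction G₂ Y₂] (g : G₁ × G₂) (y : Y₁ × Y₂) : g • y = (g.1 • y.1, g.2 • y.2) := rfl

namespace MeasureTheory

theorem Measure.QuasiMeasurePreserving.prodMap {α β γ δ : Type*} [MeasurableSpace α]
    [MeasurableSpace β] [MeasurableSpace γ] [MeasurableSpace δ] {μa : Measure α}
    {μb : Measure β} {μc : Measure γ} {μd : Measure δ} [SFinite μa] [SFinite μc] [SFinite μd]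
    {f : α → β} {g : γ → δ} (hf : QuasiMeasurePreserving f μa μb)
    (hg : QuasiMeasurePreserving g μc μd) :
    QuasiMeasurePreserving (Prod.map f g) (μa.prod μc) (μb.prod μd) :=
  ⟨hf.measurable.prodMap hg.measurable, by
    rw [← Measure.map_prod_map μa μc hf.measurable hg.measurable]
    exact hf.absolutelyContinuous.prod hg.absolutelyContinuous⟩

theorem Measure.MeasureDense.exists_measure_symmDiff_lt {X : Type*} [MeasurableSpace X]
    {μ : Measure X} {𝒜 : Set (Set X)} (h𝒜 : μ.MeasureDense 𝒜) {s : Set X}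
    (hs : MeasurableSet s) (hμs : μ s ≠ ∞) {ε : ℝ≥0∞} (hε : 0 < ε) :
    ∃ t ∈ 𝒜, μ (symmDiff s t) < ε := by
  obtain ⟨r, -, hr, hrε⟩ := ENNReal.lt_iff_exists_real_btwn.1 hε
  obtain ⟨t, ht, hst⟩ := h𝒜.approx s hs hμs r (ENNReal.ofReal_pos.1 hr)
  exact ⟨t, ht, hst.trans hrε⟩

theorem ae_smul_eq_of_ae_eq_comp_snd {G Y₁ Y₂ V : Type*} [MeasurableSpace Y₁]
    [MeasurableSpace Y₂] [SMul G Y₂] [SMul G V] {μ₁ : Measure Y₁} [NeZero μ₁] [SFinite μ₁]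
    {μ₂ : Measure Y₂} [SFinite μ₂] {f : Y₁ × Y₂ → V} {g : Y₂ → V}
    (hfg : f =ᵐ[μ₁.prod μ₂] fun p => g p.2) {t : G}
    (ht : Measure.QuasiMeasurePreserving (t • ·) μ₂ μ₂)
    (hft : ∀ᵐ p ∂μ₁.prod μ₂, f (p.1, t • p.2) = t • f p) :
    ∀ᵐ y ∂μ₂, g (t • y) = t • g y := by
  have hT := (Measure.QuasiMeasurePreserving.id μ₁).prodMap ht
  have hg : ∀ᵐ p ∂μ₁.prod μ₂, g (t • p.2) = t • g p.2 := by
    filter_upwards [hfg, hT.ae hfg, hft] with p h₁ h₂ h₃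
    rw [← h₁, ← h₃]
    exact h₂.symm
  exact Filter.eventually_const.1 (Measure.ae_ae_of_ae_prod hg)

end MeasureTheory

section PiecewiseConst

variable {X V : Type*}

open Classical in
noncomputable def piecewiseConst (v₀ : V) : List (Set X × V) → X → V
  | [] => fun _ => v₀
  | (A, v) :: L => A.piecewise (fun _ => v) (piecewiseConst v₀ L)

open Classical in
lemma piecewiseConst_cons (v₀ : V) (A : Set X) (v : V) (L : List (Set X × V)) :
    piecewiseConst v₀ ((A, v) :: L) = A.piecewise (fun _ => v) (piecewiseConst v₀ L) := rfl

lemma piecewiseConst_fibers (v₀ : V) (f : X → V) {x : X} {l : List V} (hx : f x ∈ l) :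
    piecewiseConst v₀ (l.map fun v => (f ⁻¹' {v}, v)) x = f x := by
  induction l with
  | nil => simp at hx
  | cons v l ih =>
    by_cases h : f x = v
    · simp [piecewiseConst_cons, h]
    · simpa [piecewiseConst_cons, h] using ih ((List.mem_cons.1 hx).resolve_left h)

lemma stronglyMeasurable_piecewiseConst [MeasurableSpace X] [TopologicalSpace V] (v₀ : V)
    {L : List (Set X × V)} (hL : ∀ p ∈ L, MeasurableSet p.1) :
    StronglyMeasurable (piecewiseConst v₀ L) := by
  induction L with
  | nil => exact stronglyMeasurable_const
  | cons p L ih =>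
    exact StronglyMeasurable.piecewise (hL p List.mem_cons_self) stronglyMeasurable_const
      (ih fun q hq => hL q (List.mem_cons_of_mem p hq))

end PiecewiseConst

namespace MeasureTheory.AEEqFun

variable {X V : Type*} [MeasurableSpace X] {μ : Measure X}

lemma countable_setOf_exists_ae_eq [TopologicalSpace V] {ι : Type*} [Countable ι]
    (F : ι → X → V) : {φ : X →ₘ[μ] V | ∃ i, φ =ᵐ[μ] F i}.Countable := by
  refine (Set.countable_iUnion fun i => Set.Subsingleton.countable
    (s := {φ : X →ₘ[μ] V | φ =ᵐ[μ] F i}) fun _ hφ _ hψ =>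
      ext (EventuallyEq.trans hφ (EventuallyEq.symm hψ))).mono
    fun φ ⟨i, hi⟩ => Set.mem_iUnion.2 ⟨i, hi⟩

section TruncEDist

variable [PseudoEMetricSpace V]

/-- On a.e.-classes, this metrizes convergence in measure (for finite `μ`). -/
noncomputable def truncEDist (μ : Measure X) (f g : X → V) : ℝ≥0∞ :=
  ∫⁻ x, min 1 (edist (f x) (g x)) ∂μ

lemma aemeasurable_min_one_edist {f g : X → V} (hf : AEStronglyMeasurable f μ)
    (hg : AEStronglyMeasurable g μ) : AEMeasurable (fun x => min 1 (edist (f x) (g x))) μ :=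
  aemeasurable_const.min (continuous_edist.comp_aestronglyMeasurable (hf.prodMk hg)).aemeasurable

lemma truncEDist_triangle {f g : X → V} (h : X → V) (hf : AEStronglyMeasurable f μ)
    (hg : AEStronglyMeasurable g μ) :
    truncEDist μ f h ≤ truncEDist μ f g + truncEDist μ g h := by
  rw [truncEDist, truncEDist, truncEDist,
    ← lintegral_add_left' (aemeasurable_min_one_edist hf hg)]
  refine MeasureTheory.lintegral_mono fun x => ?_
  exact (min_le_min_left 1 (edist_triangle _ _ _)).trans (min_one_add_le _ _)

lemma truncEDist_lt_top [IsFiniteMeasure μ] (f g : X → V) : truncEDist μ f g < ∞ :=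
  (MeasureTheory.lintegral_mono fun _ => min_le_left _ _).trans_lt
    (lintegral_const_lt_top one_ne_top)

open Classical in
lemma truncEDist_piecewise_le {A B : Set X} (hA : MeasurableSet A) (hB : MeasurableSet B)
    (v : V) (f g : X → V) :
    truncEDist μ (A.piecewise (fun _ => v) f) (B.piecewise (fun _ => v) g)
      ≤ μ (symmDiff A B) + truncEDist μ f g := by
  rw [truncEDist, truncEDist, ← lintegral_indicator_one (hA.symmDiff hB),
    ← lintegral_add_left (measurable_one.indicator (hA.symmDiff hB))]
  refine MeasureTheory.lintegral_mono fun x => ?_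
  by_cases hx : x ∈ symmDiff A B
  · simp [hx]
  · have hAB : x ∈ A ↔ x ∈ B := by
      simp only [Set.mem_symmDiff, not_or, not_and_not_right] at hx
      exact ⟨hx.1, hx.2⟩
    by_cases hxA : x ∈ A
    · simp [hx, hxA, hAB.1 hxA]
    · simp [hx, hxA, mt hAB.2 hxA]

lemma tendsto_truncEDist_approxOn [IsFiniteMeasure μ] [MeasurableSpace V]
    [OpensMeasurableSpace V] [SecondCountableTopology V] {f : X → V} (hf : Measurable f)
    {s : Set V} {y₀ : V} (h₀ : y₀ ∈ s) [SeparableSpace s] (hs : ∀ x, f x ∈ closure s) :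
    Tendsto (fun n => truncEDist μ f (SimpleFunc.approxOn f hf s y₀ h₀ n)) atTop (𝓝 0) := by
  simpa [truncEDist] using
    tendsto_lintegral_filter_of_dominated_convergence' (fun _ => 1) (f := fun _ => 0)
    (Eventually.of_forall fun n => aemeasurable_min_one_edist hf.aestronglyMeasurable
      (SimpleFunc.stronglyMeasurable _).aestronglyMeasurable)
    (Eventually.of_forall fun n => ae_of_all _ fun x => min_le_left _ _)
    (lintegral_const_lt_top one_ne_top).ne
    (ae_of_all _ fun x => by
      simpa using (tendsto_const_nhds (x := (1 : ℝ≥0∞))).min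
        ((tendsto_const_nhds (x := f x)).edist (SimpleFunc.tendsto_approxOn hf h₀ (hs x))))

end TruncEDist

variable [EMetricSpace V] [IsFiniteMeasure μ]

noncomputable instance instMetricSpace : MetricSpace (X →ₘ[μ] V) :=
  @EMetricSpace.toMetricSpace _
    { edist := fun φ ψ => truncEDist μ φ ψ
      edist_self := fun φ => by simp [truncEDist]
      edist_comm := fun φ ψ => by simp only [truncEDist, edist_comm]
      edist_triangle := fun φ ψ χ =>
        truncEDist_triangle χ φ.aestronglyMeasurable ψ.aestronglyMeasurable
      eq_of_edist_eq_zero := fun {φ ψ} h => by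
        refine ext (((lintegral_eq_zero_iff' ?_).1 h).mono fun x hx => ?_)
        · exact aemeasurable_min_one_edist φ.aestronglyMeasurable ψ.aestronglyMeasurable
        · simpa using hx }
    fun φ ψ => (truncEDist_lt_top φ ψ).ne

noncomputable instance : MeasurableSpace (X →ₘ[μ] V) := borel _

instance : BorelSpace (X →ₘ[μ] V) := ⟨rfl⟩

lemma edist_def (φ ψ : X →ₘ[μ] V) : edist φ ψ = truncEDist μ φ ψ := rfl

lemma edist_eq_truncEDist {φ ψ : X →ₘ[μ] V} {f g : X → V} (hf : φ =ᵐ[μ] f)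
    (hg : ψ =ᵐ[μ] g) : edist φ ψ = truncEDist μ f g :=
  lintegral_congr_ae (by filter_upwards [hf, hg] with x hfx hgx; rw [hfx, hgx])

lemma mem_closure_of_ae_eq_piecewiseConst {𝒜 : Set (Set X)} (h𝒜 : μ.MeasureDense 𝒜)
    {u : ℕ → V} {L : List (Set X × V)} (hL : ∀ p ∈ L, MeasurableSet p.1 ∧ p.2 ∈ Set.range u)
    {φ : X →ₘ[μ] V} (hφ : φ =ᵐ[μ] piecewiseConst (u 0) L) :
    φ ∈ closure {ψ : X →ₘ[μ] V | ∃ L' : List (𝒜 × ℕ),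
      ψ =ᵐ[μ] piecewiseConst (u 0) (L'.map fun p => ((p.1 : Set X), u p.2))} := by
  induction L generalizing φ with
  | nil => exact subset_closure ⟨[], hφ⟩
  | cons p L ih =>
    obtain ⟨A, v⟩ := p
    obtain ⟨⟨hA, k, rfl⟩, hLtail⟩ := List.forall_mem_cons.1 hL
    have hpw := stronglyMeasurable_piecewiseConst (u 0) fun q hq => (hLtail q hq).1
    refine EMetric.mem_closure_iff.2 fun ε hε => ?_
    obtain ⟨B, hB, hAB⟩ :=
      h𝒜.exists_measure_symmDiff_lt hA (measure_ne_top μ A) (ENNReal.half_pos hε.ne')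
    obtain ⟨ψ, ⟨L', hψ⟩, hψε⟩ := EMetric.mem_closure_iff.1
      (ih hLtail (coeFn_mk _ hpw.aestronglyMeasurable)) _ (ENNReal.half_pos hε.ne')
    have hpw' := stronglyMeasurable_piecewiseConst (u 0) (L := ((⟨B, hB⟩, k) :: L').map
      fun p : 𝒜 × ℕ => ((p.1 : Set X), u p.2)) (by
        simp only [List.mem_map]
        rintro _ ⟨q, -, rfl⟩
        exact h𝒜.measurable _ q.1.2)
    refine ⟨mk _ hpw'.aestronglyMeasurable, ⟨_, coeFn_mk _ _⟩, ?_⟩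
    rw [edist_eq_truncEDist hφ (coeFn_mk _ _)]
    calc _ ≤ μ (symmDiff A B) + edist (mk _ hpw.aestronglyMeasurable) ψ := by
          rw [edist_eq_truncEDist (coeFn_mk _ _) hψ]
          exact truncEDist_piecewise_le hA (h𝒜.measurable B hB) _ _ _
      _ < ε / 2 + ε / 2 := ENNReal.add_lt_add hAB hψε
      _ = ε := ENNReal.add_halves ε

instance [IsSeparable μ] [SeparableSpace V] : SeparableSpace (X →ₘ[μ] V) := by
  rcases isEmpty_or_nonempty V with hV | hV
  · have : Subsingleton (X →ₘ[μ] V) :=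
      ⟨fun φ _ => ext (ae_of_all _ fun x => (IsEmpty.false (φ x)).elim)⟩
    infer_instance
  borelize V
  have := UniformSpace.secondCountable_of_separable V
  obtain ⟨𝒜, h𝒜c, h𝒜⟩ := exists_countable_measureDense μ
  have := h𝒜c.to_subtype
  set u := denseSeq V
  have : SeparableSpace (Set.range u) := (Set.countable_range u).to_subtype.to_separableSpace
  refine ⟨⟨_, countable_setOf_exists_ae_eq
    fun L : List (𝒜 × ℕ) => piecewiseConst (u 0) (L.map fun p => ((p.1 : Set X), u p.2)),
    fun φ => ?_⟩⟩
  -- approximate `φ` by simple functions with values in `range u`, and these by `𝒜`-step functions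
  let a := SimpleFunc.approxOn φ φ.measurable (Set.range u) (u 0) ⟨0, rfl⟩
  rw [← closure_closure]
  refine mem_closure_of_tendsto (b := atTop)
    (f := fun n => mk (a n) (a n).stronglyMeasurable.aestronglyMeasurable) ?_
    (Eventually.of_forall fun n => ?_)
  · rw [tendsto_iff_edist_tendsto_0]
    refine (tendsto_truncEDist_approxOn (μ := μ) (s := Set.range u) φ.measurable ⟨0, rfl⟩
      fun x => ?_).congr fun n => ?_
    · rw [(denseRange_denseSeq V).closure_range]
      trivial
    · rw [edist_comm, edist_eq_truncEDist .rfl (coeFn_mk _ _)]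
  · refine mem_closure_of_ae_eq_piecewiseConst h𝒜
      (L := (a n).range.toList.map fun v => (a n ⁻¹' {v}, v)) ?_
      ((coeFn_mk _ _).trans (Eventually.of_forall fun x => ?_))
    · simp only [List.mem_map, Finset.mem_toList, SimpleFunc.mem_range]
      rintro _ ⟨_, ⟨x, rfl⟩, rfl⟩
      exact ⟨(a n).measurableSet_fiber _, SimpleFunc.approxOn_mem _ _ n x⟩
    · exact (piecewiseConst_fibers _ _ (Finset.mem_toList.2 ((a n).mem_range_self x))).symm

variable {G : Type*}

instance [SMul G V] [IsIsometricSMul G V] : IsIsometricSMul G (X →ₘ[μ] V) :=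
  ⟨fun g φ ψ => by
    rw [edist_eq_truncEDist (coeFn_smul g φ) (coeFn_smul g ψ), edist_def]
    simp [truncEDist, edist_smul_left]⟩

lemma continuous_smul_const [TopologicalSpace G] [FirstCountableTopology G] [SMul G V]
    [ContinuousSMul G V] (φ : X →ₘ[μ] V) : Continuous fun g : G => g • φ := by
  refine continuous_iff_continuousAt.2 fun g₀ => tendsto_iff_edist_tendsto_0.2 ?_
  simp only [edist_eq_truncEDist (coeFn_smul _ φ) (coeFn_smul g₀ φ)]
  simpa [truncEDist] using
    tendsto_lintegral_filter_of_dominated_convergence' (fun _ => 1) (f := fun _ => 0)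
    (Eventually.of_forall fun g => aemeasurable_min_one_edist
      ((continuous_const_smul g).comp_aestronglyMeasurable φ.aestronglyMeasurable)
      ((continuous_const_smul g₀).comp_aestronglyMeasurable φ.aestronglyMeasurable))
    (Eventually.of_forall fun g => ae_of_all _ fun x => min_le_left _ _)
    (lintegral_const_lt_top one_ne_top).ne
    (ae_of_all _ fun x => by
      simpa using (tendsto_const_nhds (x := (1 : ℝ≥0∞))).min
        ((continuous_id.smul continuous_const (g := fun _ => φ x)).tendsto g₀ |>.edist
          (tendsto_const_nhds (x := g₀ • φ x))))

instance [TopologicalSpace G] [FirstCountableTopology G] [SMul G V] [ContinuousSMul G V]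
    [IsIsometricSMul G V] : ContinuousSMul G (X →ₘ[μ] V) :=
  IsIsometricSMul.continuousSMul continuous_smul_const

end MeasureTheory.AEEqFun

namespace MetricallyErgodic

section

variable {S Y : Type*} [Group S] [TopologicalSpace S] [MeasurableSpace Y] [MulAction S Y]
  {ν : Measure Y}

theorem exists_ae_eq_const (h : MetricallyErgodic S Y ν) {V : Type} [MetricSpace V]
    [MeasurableSpace V] [BorelSpace V] [SeparableSpace V] [MulAction S V] [ContinuousSMul S V]
    [IsIsometricSMul S V] {f : Y → V} (hf : Measurable f)
    (hfS : ∀ s : S, ∀ᵐ y ∂ν, f (s • y) = s • f y) : ∃ v, ∀ᵐ y ∂ν, f y = v :=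
  h V ‹_› continuous_smul (isometry_smul V) f hf hfS

theorem nonempty (h : MetricallyErgodic S Y ν) : Nonempty Y := by
  by_contra hY
  rw [not_nonempty_iff] at hY
  let : MulAction S Empty :=
    { smul := fun _ e => e, one_smul := fun _ => rfl, mul_smul := fun _ _ _ => rfl }
  obtain ⟨v, -⟩ := h Empty inferInstance continuous_of_discreteTopology (fun _ => isometry_id)
    isEmptyElim (measurable_of_subsingleton_codomain _) (fun _ => ae_of_all _ isEmptyElim)
  exact v.elim

end

theorem exists_ae_eq_comp_snd {G Y₁ : Type*} {Y₂ : Type} [Group G] [TopologicalSpace G]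
    [FirstCountableTopology G] [MeasurableSpace Y₁] [MulAction G Y₁] {μ₁ : Measure Y₁}
    [MeasurableSpace Y₂] [MeasurableSpace.CountablyGenerated Y₂] {μ₂ : Measure Y₂} [SFinite μ₂]
    (h : MetricallyErgodic G Y₁ μ₁) {V : Type} [MetricSpace V] [MeasurableSpace V]
    [BorelSpace V] [SeparableSpace V] [MulAction G V] [ContinuousSMul G V] [IsIsometricSMul G V]
    {f : Y₁ × Y₂ → V} (hf : Measurable f)
    (hfG : ∀ t : G, ∀ᵐ p ∂μ₁.prod μ₂, f (t • p.1, p.2) = t • f p) :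
    ∃ g : Y₂ → V, Measurable g ∧ f =ᵐ[μ₁.prod μ₂] fun p => g p.2 := by
  have := UniformSpace.secondCountable_of_separable V
  -- `μ₂.toFinite` is a finite measure with the null sets of `μ₂`
  let F : Y₁ → (Y₂ →ₘ[μ₂.toFinite] V) := fun y₁ =>
    AEEqFun.mk (fun y₂ => f (y₁, y₂)) (hf.comp measurable_prodMk_left).aestronglyMeasurable
  have hF : Measurable F := measurable_of_measurable_edist fun ψ => by
    simp only [F, AEEqFun.edist_eq_truncEDist (AEEqFun.coeFn_mk _ _) .rfl, AEEqFun.truncEDist]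
    exact (measurable_const.min (hf.edist (ψ.measurable.comp measurable_snd))).lintegral_prod_right'
  have hFG : ∀ t : G, ∀ᵐ y₁ ∂μ₁, F (t • y₁) = t • F y₁ := fun t => by
    filter_upwards [Measure.ae_ae_of_ae_prod (hfG t)] with y₁ hy₁
    rw [AEEqFun.smul_mk]
    exact AEEqFun.mk_eq_mk.2 (by rwa [ae_toFinite])
  obtain ⟨φ, hφ⟩ := h.exists_ae_eq_const hF hFG
  refine ⟨φ, φ.measurable, (Measure.ae_prod_iff_ae_ae
    (measurableSet_eq_fun hf (φ.measurable.comp measurable_snd))).2 ?_⟩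
  filter_upwards [hφ] with y₁ hy₁
  rw [← ae_toFinite, ← hy₁]
  exact (AEEqFun.coeFn_mk _ _).symm

theorem prod {G₁ G₂ Y₁ : Type*} {Y₂ : Type} [Group G₁] [TopologicalSpace G₁]
    [FirstCountableTopology G₁] [Group G₂] [TopologicalSpace G₂] [MeasurableSpace Y₁]
    [MeasurableSpace Y₂] [MeasurableSpace.CountablyGenerated Y₂] [MulAction G₁ Y₁]
    [MulAction G₂ Y₂] {μ₁ : Measure Y₁} {μ₂ : Measure Y₂} [SFinite μ₁] [SFinite μ₂]
    (h₁ : MetricallyErgodic G₁ Y₁ μ₁) (h₂ : MetricallyErgodic G₂ Y₂ μ₂)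
    (hq₂ : ∀ t : G₂, Measure.QuasiMeasurePreserving (t • ·) μ₂ μ₂) :
    MetricallyErgodic (G₁ × G₂) (Y₁ × Y₂) (μ₁.prod μ₂) := by
  intro V _ _ _ _ _ hC hiso f hf hfG
  rcases eq_zero_or_neZero μ₁ with rfl | _
  · exact ⟨f (h₁.nonempty.some, h₂.nonempty.some), by simp⟩
  have : ContinuousSMul (G₁ × G₂) V := ⟨hC⟩
  have : IsIsometricSMul (G₁ × G₂) V := ⟨hiso⟩
  let : MulAction G₁ V := MulAction.compHom V (MonoidHom.inl G₁ G₂)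
  let : MulAction G₂ V := MulAction.compHom V (MonoidHom.inr G₁ G₂)
  have : ContinuousSMul G₁ V :=
    MulAction.continuousSMul_compHom (continuous_id.prodMk continuous_const)
  have : ContinuousSMul G₂ V :=
    MulAction.continuousSMul_compHom (continuous_const.prodMk continuous_id)
  have : IsIsometricSMul G₁ V := ⟨fun t => isometry_smul V ((t, 1) : G₁ × G₂)⟩
  have : IsIsometricSMul G₂ V := ⟨fun t => isometry_smul V ((1, t) : G₁ × G₂)⟩
  obtain ⟨g, hg, hfg⟩ := h₁.exists_ae_eq_comp_snd hf fun t =>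
    (hfG (t, 1)).mono fun p hp => by simp only [Prod.smul_prod_def, one_smul] at hp; exact hp
  obtain ⟨v, hv⟩ := h₂.exists_ae_eq_const hg fun t => ae_smul_eq_of_ae_eq_comp_snd hfg (hq₂ t)
    ((hfG (1, t)).mono fun p hp => by simp only [Prod.smul_prod_def, one_smul] at hp; exact hp)
  refine ⟨v, ?_⟩
  filter_upwards [hfg, Measure.quasiMeasurePreserving_snd.ae hv] with p h₁ h₂
  rw [h₁, h₂]

theorem of_measurePreserving {G H Y Z : Type*} [Group G] [TopologicalSpace G] [Group H]
    [TopologicalSpace H] [MeasurableSpace Y] [MeasurableSpace Z] [MulAction G Y] [MulAction H Z]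
    {μ : Measure Y} {ν : Measure Z} (h : MetricallyErgodic G Y μ) (σ : G →* H)
    (hσ : Continuous σ) {e : Y → Z} (he : MeasurePreserving e μ ν)
    (he_smul : ∀ g y, e (g • y) = σ g • e y) : MetricallyErgodic H Z ν := by
  intro V _ _ _ _ _ hC hiso f hf hfH
  have : ContinuousSMul H V := ⟨hC⟩
  let : MulAction G V := MulAction.compHom V σ
  have : ContinuousSMul G V := MulAction.continuousSMul_compHom hσ
  have : IsIsometricSMul G V := ⟨fun g => hiso (σ g)⟩
  obtain ⟨v, hv⟩ := h.exists_ae_eq_const (hf.comp he.measurable) fun g => by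
    filter_upwards [he.quasiMeasurePreserving.ae (hfH (σ g))] with y hy
    rw [Function.comp_apply, he_smul, hy]
    rfl
  refine ⟨v, ?_⟩
  rw [← he.map_eq]
  exact (ae_map_iff he.measurable.aemeasurable (hf (measurableSet_singleton v))).2 hv

theorem pi {n : ℕ} {S : Fin n → Type*} [∀ i, Group (S i)] [∀ i, TopologicalSpace (S i)]
    [∀ i, FirstCountableTopology (S i)] {Y : Fin n → Type} [∀ i, MeasurableSpace (Y i)]
    [∀ i, MeasurableSpace.CountablyGenerated (Y i)] {ν : ∀ i, Measure (Y i)}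
    [∀ i, SigmaFinite (ν i)] [∀ i, MulAction (S i) (Y i)]
    (hq : ∀ i, ∀ s : S i, Measure.QuasiMeasurePreserving (s • ·) (ν i) (ν i))
    (h : ∀ i, MetricallyErgodic (S i) (Y i) (ν i)) :
    MetricallyErgodic (∀ i, S i) (∀ i, Y i) (Measure.pi ν) := by
  induction n with
  | zero =>
    intro V _ _ _ _ _ _ _ f _ _
    exact ⟨f isEmptyElim, ae_of_all _ fun y => congrArg f (Subsingleton.elim _ _)⟩
  | succ n ih =>
    let σ : ((∀ j, S (Fin.succAbove 0 j)) × S 0) →* ∀ i, S i :=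
      MonoidHom.mk' (fun g => Fin.insertNth 0 g.2 g.1) fun _ _ => Fin.insertNth_mul _ _ _ _ _
    refine ((ih (fun _ => hq _) (fun _ => h _)).prod (h 0) (hq 0)).of_measurePreserving σ
      (continuous_snd.finInsertNth 0 continuous_fst) (e := fun y => Fin.insertNth 0 y.2 y.1)
      (((measurePreserving_piFinSuccAbove ν 0).symm _).comp Measure.measurePreserving_swap)
      fun g y => ?_
    ext i
    refine Fin.succAboveCases 0 ?_ (fun j => ?_) i <;>
      simp only [σ, Fin.insertNth_apply_same, Fin.insertNth_apply_succAbove, MonoidHom.mk'_apply,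
        Prod.smul_prod_def, Pi.smul_apply']

end MetricallyErgodic

theorem metricallyErgodic_pi_general
    (n : ℕ) (S : Fin n → Type) [∀ i, Group (S i)] [∀ i, TopologicalSpace (S i)]
    [∀ i, SecondCountableTopology (S i)]
    (Y : Fin n → Type) [∀ i, MeasurableSpace (Y i)] [∀ i, StandardBorelSpace (Y i)]
    (ν : ∀ i, Measure (Y i)) [∀ i, SigmaFinite (ν i)]
    [∀ i, MulAction (S i) (Y i)]
    (hqmp : ∀ i, ∀ s : S i,
      Measure.QuasiMeasurePreserving (fun y : Y i => s • y) (ν i) (ν i))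
    (hme : ∀ i, MetricallyErgodic (S i) (Y i) (ν i)) :
    MetricallyErgodic (∀ i, S i) (∀ i, Y i) (Measure.pi ν) :=
  MetricallyErgodic.pi hqmp hme

/-- If for each `i` the lcsc group `Sᵢ` acts measurably, measure-class-preservingly and
metrically ergodically on a σ-finite standard measure space `(Yᵢ, νᵢ)`, then the
coordinatewise product action of `S₁ × ⋯ × Sₙ` on `(Y₁ × ⋯ × Yₙ, ν₁ × ⋯ × νₙ)` is
metrically ergodic. -/
theorem metricallyErgodic_pi
    (n : ℕ) (S : Fin n → Type) [∀ i, Group (S i)] [∀ i, TopologicalSpace (S i)]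
    [∀ i, IsTopologicalGroup (S i)] [∀ i, LocallyCompactSpace (S i)]
    [∀ i, SecondCountableTopology (S i)]
    (Y : Fin n → Type) [∀ i, MeasurableSpace (Y i)] [∀ i, StandardBorelSpace (Y i)]
    (ν : ∀ i, Measure (Y i)) [∀ i, SigmaFinite (ν i)]
    [∀ i, MulAction (S i) (Y i)]
    (hmeas : ∀ i, ∀ s : S i, Measurable fun y : Y i => s • y)
    (hqmp : ∀ i, ∀ s : S i,
      Measure.QuasiMeasurePreserving (fun y : Y i => s • y) (ν i) (ν i))
    (hme : ∀ i, MetricallyErgodic (S i) (Y i) (ν i)) :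
    MetricallyErgodic (∀ i, S i) (∀ i, Y i) (Measure.pi ν) :=
  metricallyErgodic_pi_general n S Y ν hqmp hme
end

section
/- Let S be a locally compact second countable group with left Haar measure λ, and let (X, μ) be a σ-finite standard measure space with a measurable S-action that is nonsingular in the joint sense: for every μ-null set N ⊆ X, the set {(s, x) ∈ S × X : s·x ∈ N} is (λ × μ)-null. Let Γ be a countable group together with a homomorphism α : Γ → S, through which Γ acts on X and on S (by left translation s ↦ α(γ)s). Let (Z, ζ) be a σ-finite standard measure space with a measurable, measure-class-preserving Γ-action, let V be a standard Borel space with a measurable Γ-action, and let φ : X × Z → V be a measurable map satisfying φ(γ·x, γ·z) = γ·φ(x, z) for every γ ∈ Γ and (μ × ζ)-almost every (x, z). Then for μ-almost every x ∈ X, the map φ̂_x : S × Z → V defined by φ̂_x(s, z) = φ(s·x, z) satisfies φ̂_x(α(γ)s, γ·z) = γ·φ̂_x(s, z) for every γ ∈ Γ and (λ × ζ)-almost every (s, z). -/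
/-!
Pull the a.e. equivariance of `φ` back along `((s, x), z) ↦ (s • x, z)`, which is
quasi-measure-preserving from `(λ × μ) × ζ` to `μ × ζ` by joint nonsingularity of the action.
This gives `φ (α γ • s • x, γ • z) = γ • φ (s • x, z)` for a.e. `((s, x), z)`; Fubini then
yields it for a.e. `x` and a.e. `(s, z)`, and countability of `Γ` lets `x` be chosen
independently of `γ`.
-/

open MeasureTheory Measure

namespace MeasureTheory.Measure.QuasiMeasurePreserving

variable {α β : Type*} [MeasurableSpace α] [MeasurableSpace β] {μa : Measure α} {μb : Measure β}

theorem of_preimage_null {f : α → β} (hf : Measurable f)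
    (h : ∀ s, μb s = 0 → μa (f ⁻¹' s) = 0) : QuasiMeasurePreserving f μa μb :=
  ⟨hf, AbsolutelyContinuous.mk fun s hs hs0 => by rw [map_apply hf hs]; exact h s hs0⟩

end MeasureTheory.Measure.QuasiMeasurePreserving

section

variable {S X Z : Type*} [MeasurableSpace S] [MeasurableSpace X] [MeasurableSpace Z]
  {lam : Measure S} {μ : Measure X} {ζ : Measure Z} [SFinite lam] [SFinite μ] [SFinite ζ]

theorem measurePreserving_prodAssoc_swap :
    MeasurePreserving (fun r : X × (S × Z) => ((r.2.1, r.1), r.2.2))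
      (μ.prod (lam.prod ζ)) ((lam.prod μ).prod ζ) :=
  (measurePreserving_swap.prod (MeasurePreserving.id ζ)).comp
    ((measurePreserving_prodAssoc μ lam ζ).symm _)

theorem ae_ae_comp_of_quasiMeasurePreserving {f : S × X → X}
    (hf : QuasiMeasurePreserving f (lam.prod μ) μ) {P : X × Z → Prop}
    (hP : ∀ᵐ p ∂μ.prod ζ, P p) :
    ∀ᵐ x ∂μ, ∀ᵐ q ∂lam.prod ζ, P (f (q.1, x), q.2) := by
  have hpull : ∀ᵐ r ∂(lam.prod μ).prod ζ, P (f r.1, r.2) :=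
    (MeasureTheory.QuasiMeasurePreserving.prodMap hf (.id ζ)).ae hP
  exact ae_ae_of_ae_prod (measurePreserving_prodAssoc_swap.quasiMeasurePreserving.ae hpull)

end

theorem lifting_lemma_general
    (S : Type*) [Group S] [TopologicalSpace S]
    [LocallyCompactSpace S] [SecondCountableTopology S]
    [MeasurableSpace S]
    (lam : Measure S) [lam.IsHaarMeasure]
    (X : Type*) [MeasurableSpace X]
    (μ : Measure X) [SigmaFinite μ]
    [MulAction S X]
    (hXmeas : Measurable fun p : S × X => p.1 • p.2)
    (hns : ∀ N : Set X, μ N = 0 → (lam.prod μ) {p : S × X | p.1 • p.2 ∈ N} = 0)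
    (Γ : Type*) [Group Γ] [Countable Γ]
    (α : Γ →* S)
    (Z : Type*) [MeasurableSpace Z]
    (ζ : Measure Z) [SigmaFinite ζ]
    [MulAction Γ Z]
    (V : Type*)
    [MulAction Γ V]
    (φ : X × Z → V)
    (hφ : ∀ γ : Γ, ∀ᵐ p : X × Z ∂(μ.prod ζ), φ (α γ • p.1, γ • p.2) = γ • φ p) :
    ∀ᵐ x ∂μ, ∀ γ : Γ, ∀ᵐ q : S × Z ∂(lam.prod ζ),
      φ ((α γ * q.1) • x, γ • q.2) = γ • φ (q.1 • x, q.2) := by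
  have hact : QuasiMeasurePreserving (fun p : S × X => p.1 • p.2) (lam.prod μ) μ :=
    .of_preimage_null hXmeas hns
  refine ae_all_iff.2 fun γ => ?_
  filter_upwards [ae_ae_comp_of_quasiMeasurePreserving hact (hφ γ)] with x hx
  filter_upwards [hx] with q hq
  rwa [mul_smul]

/-- Lifting lemma: given a jointly nonsingular measurable `S`-action on `(X, μ)`, a countable
group `Γ` mapping to `S` via `α`, a measure-class-preserving `Γ`-action on `(Z, ζ)`, a Borel
`Γ`-space `V`, and a measurable map `φ : X × Z → V` which is a.e. `Γ`-equivariant, for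
`μ`-a.e. `x` the lifted map `φ̂ₓ(s, z) = φ(s·x, z)` is a.e. `Γ`-equivariant on `S × Z`. -/
theorem lifting_lemma
    (S : Type*) [Group S] [TopologicalSpace S] [IsTopologicalGroup S]
    [LocallyCompactSpace S] [SecondCountableTopology S]
    [MeasurableSpace S] [BorelSpace S]
    (lam : Measure S) [lam.IsHaarMeasure]
    (X : Type*) [MeasurableSpace X] [StandardBorelSpace X]
    (μ : Measure X) [SigmaFinite μ]
    [MulAction S X]
    (hXmeas : Measurable fun p : S × X => p.1 • p.2)
    (hns : ∀ N : Set X, μ N = 0 → (lam.prod μ) {p : S × X | p.1 • p.2 ∈ N} = 0)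
    (Γ : Type*) [Group Γ] [Countable Γ]
    (α : Γ →* S)
    (Z : Type*) [MeasurableSpace Z] [StandardBorelSpace Z]
    (ζ : Measure Z) [SigmaFinite ζ]
    [MulAction Γ Z]
    (hZmeas : ∀ γ : Γ, Measurable fun z : Z => γ • z)
    (hZqmp : ∀ γ : Γ, Measure.QuasiMeasurePreserving (fun z : Z => γ • z) ζ ζ)
    (V : Type*) [MeasurableSpace V] [StandardBorelSpace V]
    [MulAction Γ V]
    (hVmeas : ∀ γ : Γ, Measurable fun v : V => γ • v)
    (φ : X × Z → V) (hφmeas : Measurable φ)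
    (hφ : ∀ γ : Γ, ∀ᵐ p : X × Z ∂(μ.prod ζ), φ (α γ • p.1, γ • p.2) = γ • φ p) :
    ∀ᵐ x ∂μ, ∀ γ : Γ, ∀ᵐ q : S × Z ∂(lam.prod ζ),
      φ ((α γ * q.1) • x, γ • q.2) = γ • φ (q.1 • x, q.2) :=
  lifting_lemma_general S lam X μ hXmeas hns Γ α Z ζ V φ hφ
end

section
/- Let S and S′ be locally compact second countable groups, let λ′ be a left Haar measure on S′, and let θ : S → S′ be a continuous homomorphism. Let G be a Polish group, let ρ : S → G and ρ′ : S′ → G be continuous homomorphisms, and let φ : S′ → G be a Borel measurable map such that for every s ∈ S and every t ∈ S′, for λ′-almost every x ∈ S′ one has φ(θ(s)·x·t) = ρ(s)·φ(x)·ρ′(t). Then there exists g ∈ G such that ρ(s) = g·ρ′(θ(s))·g⁻¹ for every s ∈ S. -/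
open MeasureTheory

/-!
Taking `s = 1` in the hypothesis, `ψ x := φ x * (ρ' x)⁻¹` satisfies `ψ (x * t) = ψ x` for a.e. `x`,
for each `t`. Fubini and the shear `(x, y) ↦ (x, x⁻¹ * y)`, which preserves `λ' × λ'`, turn this
into `ψ y = ψ x` for a.e. pair `(x, y)`, so `φ = c * ρ'` almost everywhere for a constant `c`.
Taking `t = 1` and comparing `φ (θ s * x)` with `ρ s * φ x` at one good point `x` gives
`ρ s * c = c * ρ' (θ s)`.
-/

namespace MeasureTheory

variable {H : Type*} [Group H] [MeasurableSpace H] {μ : Measure H}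

theorem exists_ae_eq_const_of_forall_ae_mul_right_eq [MeasurableMul₂ H] [MeasurableInv H]
    [SFinite μ] [μ.IsMulLeftInvariant] [NeZero μ]
    {α : Type*} [MeasurableSpace α] [MeasurableEq α] {f : H → α} (hf : Measurable f)
    (h : ∀ t, ∀ᵐ x ∂μ, f (x * t) = f x) : ∃ c, ∀ᵐ x ∂μ, f x = c := by
  have hmeas : MeasurableSet {p : H × H | f (p.1 * p.2) = f p.1} :=
    measurableSet_eq_fun (hf.comp (measurable_fst.mul measurable_snd)) (hf.comp measurable_fst)
  have h_prod : ∀ᵐ p ∂μ.prod μ, f (p.1 * p.2) = f p.1 :=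
    (Measure.ae_prod_iff_ae_ae hmeas).2 <| (Measure.ae_ae_comm hmeas).2 <| ae_of_all _ h
  have h_shear : ∀ᵐ p ∂μ.prod μ, f p.2 = f p.1 := by
    simpa using (measurePreserving_prod_inv_mul μ μ).quasiMeasurePreserving.ae h_prod
  obtain ⟨x, hx⟩ := (Measure.ae_ae_of_ae_prod h_shear).exists
  exact ⟨f x, hx⟩

theorem exists_ae_eq_const_mul_of_forall_ae_mul_right_eq [MeasurableMul₂ H] [MeasurableInv H]
    [SFinite μ] [μ.IsMulLeftInvariant] [NeZero μ]
    {G : Type*} [Group G] [MeasurableSpace G] [MeasurableMul₂ G] [MeasurableInv G] [MeasurableEq G]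
    {ρ : H →* G} (hρ : Measurable ρ) {f : H → G} (hf : Measurable f)
    (h : ∀ t, ∀ᵐ x ∂μ, f (x * t) = f x * ρ t) : ∃ c, ∀ᵐ x ∂μ, f x = c * ρ x := by
  have h_inv : ∀ t, ∀ᵐ x ∂μ, f (x * t) * (ρ (x * t))⁻¹ = f x * (ρ x)⁻¹ := fun t =>
    (h t).mono fun x hx => by rw [hx, map_mul]; group
  obtain ⟨c, hc⟩ := exists_ae_eq_const_of_forall_ae_mul_right_eq (f := fun x => f x * (ρ x)⁻¹)
    (hf.mul hρ.inv) h_inv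
  exact ⟨c, hc.mono fun x hx => by rw [← hx, inv_mul_cancel_right]⟩

theorem eq_mul_mul_inv_of_ae_eq_const_mul [MeasurableMul H] [μ.IsMulLeftInvariant] [NeZero μ]
    {G : Type*} [Group G] {ρ : H →* G} {f : H → G} {c : G} (hc : ∀ᵐ x ∂μ, f x = c * ρ x)
    {a : H} {b : G} (h : ∀ᵐ x ∂μ, f (a * x) = b * f x) : b = c * ρ a * c⁻¹ := by
  have hc_left : ∀ᵐ x ∂μ, f (a * x) = c * ρ (a * x) :=
    (measurePreserving_mul_left μ a).quasiMeasurePreserving.ae hc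
  obtain ⟨x, hax, hx, hax'⟩ := (h.and (hc.and hc_left)).exists
  have h_at_x : b * c * ρ x = c * ρ a * ρ x := by
    rw [mul_assoc, ← hx, ← hax, hax', map_mul, mul_assoc]
  exact eq_mul_inv_of_mul_eq (mul_right_cancel h_at_x)

end MeasureTheory

theorem extension_of_equivariant_map_general
    (S : Type*) [Group S]
    (S' : Type*) [Group S'] [TopologicalSpace S'] [IsTopologicalGroup S']
    [LocallyCompactSpace S'] [SecondCountableTopology S']
    [MeasurableSpace S'] [BorelSpace S']
    (lam' : Measure S') [lam'.IsHaarMeasure]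
    (θ : S →* S')
    (G : Type*) [Group G] [TopologicalSpace G] [IsTopologicalGroup G] [PolishSpace G]
    [MeasurableSpace G] [BorelSpace G]
    (ρ : S →* G)
    (ρ' : S' →* G) (hρ' : Continuous ρ')
    (φ : S' → G) (hφmeas : Measurable φ)
    (hφ : ∀ s : S, ∀ t : S', ∀ᵐ x ∂lam', φ (θ s * x * t) = ρ s * φ x * ρ' t) :
    ∃ g : G, ∀ s : S, ρ s = g * ρ' (θ s) * g⁻¹ := by
  obtain ⟨c, hc⟩ := exists_ae_eq_const_mul_of_forall_ae_mul_right_eq (μ := lam')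
    hρ'.measurable hφmeas fun t => by simpa using hφ 1 t
  exact ⟨c, fun s => eq_mul_mul_inv_of_ae_eq_const_mul hc (by simpa using hφ s 1)⟩

/-- Let `θ : S → S'` be a continuous homomorphism of lcsc groups, `λ'` a left Haar measure
on `S'`, `G` a Polish group, `ρ : S → G` and `ρ' : S' → G` continuous homomorphisms, and
`φ : S' → G` a Borel map such that for all `s ∈ S`, `t ∈ S'`, for `λ'`-a.e. `x ∈ S'` one has
`φ(θ(s)·x·t) = ρ(s)·φ(x)·ρ'(t)`. Then `ρ = inn(g) ∘ ρ' ∘ θ` for some `g ∈ G`. -/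
theorem extension_of_equivariant_map
    (S : Type*) [Group S] [TopologicalSpace S] [IsTopologicalGroup S]
    [LocallyCompactSpace S] [SecondCountableTopology S]
    (S' : Type*) [Group S'] [TopologicalSpace S'] [IsTopologicalGroup S']
    [LocallyCompactSpace S'] [SecondCountableTopology S']
    [MeasurableSpace S'] [BorelSpace S']
    (lam' : Measure S') [lam'.IsHaarMeasure]
    (θ : S →* S') (hθ : Continuous θ)
    (G : Type*) [Group G] [TopologicalSpace G] [IsTopologicalGroup G] [PolishSpace G]
    [MeasurableSpace G] [BorelSpace G]
    (ρ : S →* G) (hρ : Continuous ρ)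
    (ρ' : S' →* G) (hρ' : Continuous ρ')
    (φ : S' → G) (hφmeas : Measurable φ)
    (hφ : ∀ s : S, ∀ t : S', ∀ᵐ x ∂lam', φ (θ s * x * t) = ρ s * φ x * ρ' t) :
    ∃ g : G, ∀ s : S, ρ s = g * ρ' (θ s) * g⁻¹ :=
  extension_of_equivariant_map_general S S' lam' θ G ρ ρ' hρ' φ hφmeas hφ
end

section
/- Let X be a T0 topological space with a countable basis, and let μ be a nonzero Borel measure on X such that every open subset U ⊆ X satisfies μ(U) = 0 or μ(X \ U) = 0. Then there exists a point x ∈ X such that μ(X \ {x}) = 0. -/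
open MeasureTheory

/-- Let `X` be a T0 topological space with a countable basis and `μ` a nonzero Borel measure
on `X` such that every open set is either null or conull. Then some point `x ∈ X` is conull:
`μ({x}ᶜ) = 0`. -/
theorem exists_conull_point
    (X : Type*) [TopologicalSpace X] [T0Space X] [SecondCountableTopology X]
    [MeasurableSpace X] [BorelSpace X]
    (μ : Measure X) (hμ : μ ≠ 0)
    (h : ∀ U : Set X, IsOpen U → μ U = 0 ∨ μ Uᶜ = 0) :
    ∃ x : X, μ {x}ᶜ = 0 := by
  classical
  set B := TopologicalSpace.countableBasis X with hBdef
  have hB := TopologicalSpace.isBasis_countableBasis X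
  have hBc : B.Countable := TopologicalSpace.countable_countableBasis X
  -- bad set: union of null basic opens and complements of conull basic opens
  set bad : Set X := (⋃ b ∈ {b ∈ B | μ b = 0}, b) ∪ (⋃ b ∈ {b ∈ B | μ bᶜ = 0}, bᶜ)
    with hbad
  have hbadnull : μ bad = 0 := by
    apply measure_union_null
    · exact measure_biUnion_null_iff (hBc.mono (Set.sep_subset _ _)) |>.2
        fun b hb => hb.2
    · exact measure_biUnion_null_iff (hBc.mono (Set.sep_subset _ _)) |>.2
        fun b hb => hb.2
  have hne : ∃ x, x ∉ bad := by
    by_contra hc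
    push_neg at hc
    have : μ Set.univ = 0 := measure_mono_null (fun x _ => hc x) hbadnull
    exact hμ (by ext s hs; simp [measure_mono_null (Set.subset_univ s) this])
  obtain ⟨x, hx⟩ := hne
  have hxN : ∀ b ∈ B, x ∈ b → μ b ≠ 0 := fun b hb hxb hnull =>
    hx (Or.inl (Set.mem_biUnion ⟨hb, hnull⟩ hxb))
  have hxT : ∀ b ∈ B, μ bᶜ = 0 → x ∈ b := fun b hb hco => by
    by_contra hxb
    exact hx (Or.inr (Set.mem_biUnion ⟨hb, hco⟩ hxb))
  refine ⟨x, measure_mono_null (fun y hy => ?_) hbadnull⟩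
  have hyx : y ≠ x := hy
  obtain ⟨U, hU, hUx⟩ := exists_isOpen_xor'_mem hyx
  rcases hUx with ⟨hyU, hxU⟩ | ⟨hxU, hyU⟩
  · -- y ∈ U, x ∉ U
    obtain ⟨b, hb, hyb, hbU⟩ := hB.exists_subset_of_mem_open hyU hU
    rcases h b (TopologicalSpace.IsTopologicalBasis.isOpen hB hb) with hb0 | hbc
    · exact Or.inl (Set.mem_biUnion ⟨hb, hb0⟩ hyb)
    · exact absurd (hbU (hxT b hb hbc)) hxU
  · -- x ∈ U, y ∉ U
    obtain ⟨b, hb, hxb, hbU⟩ := hB.exists_subset_of_mem_open hxU hU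
    rcases h b (TopologicalSpace.IsTopologicalBasis.isOpen hB hb) with hb0 | hbc
    · exact absurd hb0 (hxN b hb hxb)
    · exact Or.inr (Set.mem_biUnion ⟨hb, hbc⟩ (fun hyb => hyU (hbU hyb)))
end

section
/- Let G be a Polish group acting continuously on a Polish space V in such a way that every G-orbit is locally closed in V. Let S be a group, ρ : S → G a homomorphism, and let (Y, ν) be a σ-finite standard measure space with ν ≠ 0, equipped with a measurable, measure-class-preserving, ergodic S-action. Suppose φ : Y → V is a measurable map satisfying φ(s·y) = ρ(s)·φ(y) for every s ∈ S and ν-almost every y ∈ Y. Then there exists v ∈ V such that φ(y) ∈ G·v for ν-almost every y ∈ Y. -/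
/-!
For a basic open set `U ⊆ V`, the points whose orbit meets `U` form an open `G`-invariant set,
so by ergodicity its preimage under `φ` is null or conull. Hence, off a null set, the orbits
`G • φ y` all meet the same basic open sets, i.e. they all have the same closure. A locally
closed orbit is open in its closure, so it meets every orbit with the same closure, and the
two orbits coincide.
-/

open MeasureTheory Set Filter TopologicalSpace

lemma IsLocallyClosed.inter_nonempty_of_closure_eq {X : Type*} [TopologicalSpace X]
    {s t : Set X} (hs : IsLocallyClosed s) (hne : s.Nonempty) (h : closure s = closure t) :
    (s ∩ t).Nonempty := by
  obtain ⟨w, hw⟩ := hne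
  have hwt : w ∈ closure t := h ▸ subset_closure hw
  obtain ⟨x, hx, hxt⟩ :=
    mem_closure_iff.mp hwt _ hs.isOpen_coborder (subset_coborder hw)
  refine ⟨x, ?_, hxt⟩
  rw [← coborder_inter_closure (s := s), h]
  exact ⟨hx, subset_closure hxt⟩

lemma TopologicalSpace.IsTopologicalBasis.closure_eq_closure_of_forall_inter_nonempty_iff
    {X : Type*} [TopologicalSpace X] {B : Set (Set X)} (hB : IsTopologicalBasis B)
    {s t : Set X} (h : ∀ o ∈ B, (o ∩ s).Nonempty ↔ (o ∩ t).Nonempty) :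
    closure s = closure t := by
  ext x
  simp only [hB.mem_closure_iff]
  exact forall₂_congr fun o ho => imp_congr_right fun _ => h o ho

namespace MulAction

variable {G V : Type*} [Group G] [MulAction G V] [TopologicalSpace V]

lemma mem_orbit_of_closure_orbit_eq {v w : V} (hw : IsLocallyClosed (orbit G w))
    (h : closure (orbit G w) = closure (orbit G v)) : w ∈ orbit G v := by
  obtain ⟨x, hxw, hxv⟩ := hw.inter_nonempty_of_closure_eq ⟨w, mem_orbit_self w⟩ h
  rw [← orbit_eq_iff, ← orbit_eq_iff.mpr hxw, orbit_eq_iff.mpr hxv]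

lemma isOpen_setOf_inter_orbit_nonempty [ContinuousConstSMul G V] {U : Set V} (hU : IsOpen U) :
    IsOpen {x : V | (U ∩ orbit G x).Nonempty} := by
  have : {x : V | (U ∩ orbit G x).Nonempty} = ⋃ g : G, (g • ·) ⁻¹' U := by
    ext x
    simp [Set.Nonempty, mem_orbit_iff]
  exact this ▸ isOpen_iUnion fun g => hU.preimage (continuous_const_smul g)

end MulAction

lemma MeasureTheory.exists_ae_forall_iff_of_ae_const {Y ι : Type*} [MeasurableSpace Y]
    [Countable ι] {ν : Measure Y} (hν : ν ≠ 0) {P : ι → Y → Prop}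
    (hP : ∀ i, ∃ c : Prop, ∀ᵐ y ∂ν, P i y ↔ c) :
    ∃ y₀, ∀ᵐ y ∂ν, ∀ i, P i y ↔ P i y₀ := by
  choose c hc using hP
  have : (ae ν).NeBot := ae_neBot.mpr hν
  have hall : ∀ᵐ y ∂ν, ∀ i, P i y ↔ c i := ae_all_iff.mpr hc
  obtain ⟨y₀, hy₀⟩ := hall.exists
  refine ⟨y₀, ?_⟩
  filter_upwards [hall] with y hy i
  rw [hy i, hy₀ i]

section Ergodic

variable {G S Y V : Type*} [Group G] [MulAction G V] [Group S] [MulAction S Y]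
  [MeasurableSpace Y] {ν : Measure Y} {ρ : S →* G} {φ : Y → V}

lemma measure_image_smul_symmDiff_preimage_eq_zero
    (hφ : ∀ s : S, ∀ᵐ y ∂ν, φ (s • y) = ρ s • φ y) {A : Set V}
    (hA : ∀ (g : G) (x : V), g • x ∈ A ↔ x ∈ A) (s : S) :
    ν (symmDiff ((fun y : Y => s • y) '' (φ ⁻¹' A)) (φ ⁻¹' A)) = 0 := by
  rw [image_smul, ← preimage_smul_inv, measure_symmDiff_eq_zero_iff, eventuallyEq_set]
  filter_upwards [hφ s⁻¹] with y hy
  simp only [mem_preimage, hy, hA]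

lemma exists_ae_mem_iff_of_ergodic
    (herg : ∀ A : Set Y, MeasurableSet A →
      (∀ s : S, ν (symmDiff ((fun y : Y => s • y) '' A) A) = 0) → ν A = 0 ∨ ν Aᶜ = 0)
    (hφ : ∀ s : S, ∀ᵐ y ∂ν, φ (s • y) = ρ s • φ y) {A : Set V}
    (hAmeas : MeasurableSet (φ ⁻¹' A)) (hA : ∀ (g : G) (x : V), g • x ∈ A ↔ x ∈ A) :
    ∃ c : Prop, ∀ᵐ y ∂ν, φ y ∈ A ↔ c := by
  rcases herg _ hAmeas (measure_image_smul_symmDiff_preimage_eq_zero hφ hA) with h | h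
  · exact ⟨False, (measure_eq_zero_iff_ae_notMem.mp h).mono fun y hy => iff_false_intro hy⟩
  · exact ⟨True, (show ∀ᵐ y ∂ν, y ∈ φ ⁻¹' A from mem_ae_iff.mpr h).mono
      fun y hy => iff_true_intro hy⟩

end Ergodic

theorem equivariant_map_into_single_orbit_general
    (G : Type*) [Group G] [TopologicalSpace G]
    (V : Type*) [TopologicalSpace V] [PolishSpace V]
    [MeasurableSpace V] [BorelSpace V]
    [MulAction G V]
    (hGV : Continuous fun p : G × V => p.1 • p.2)
    (horb : ∀ v : V, IsLocallyClosed (MulAction.orbit G v))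
    (S : Type*) [Group S] (ρ : S →* G)
    (Y : Type*) [MeasurableSpace Y]
    (ν : Measure Y) (hν : ν ≠ 0)
    [MulAction S Y]
    (herg : ∀ A : Set Y, MeasurableSet A →
      (∀ s : S, ν (symmDiff ((fun y : Y => s • y) '' A) A) = 0) → ν A = 0 ∨ ν Aᶜ = 0)
    (φ : Y → V) (hφmeas : Measurable φ)
    (hφ : ∀ s : S, ∀ᵐ y ∂ν, φ (s • y) = ρ s • φ y) :
    ∃ v : V, ∀ᵐ y ∂ν, φ y ∈ MulAction.orbit G v := by
  have : ContinuousSMul G V := ⟨hGV⟩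
  have hpattern (U : countableBasis V) :
      ∃ c : Prop, ∀ᵐ y ∂ν, (U.1 ∩ MulAction.orbit G (φ y)).Nonempty ↔ c :=
    exists_ae_mem_iff_of_ergodic herg hφ
      ((MulAction.isOpen_setOf_inter_orbit_nonempty
        (isOpen_of_mem_countableBasis U.2)).measurableSet.preimage hφmeas)
      fun g x => by simp only [mem_ofPred_eq, MulAction.orbit_smul]
  obtain ⟨y₀, hy₀⟩ := exists_ae_forall_iff_of_ae_const hν hpattern
  refine ⟨φ y₀, ?_⟩
  filter_upwards [hy₀] with y hy
  exact MulAction.mem_orbit_of_closure_orbit_eq (horb _)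
    ((isBasis_countableBasis V).closure_eq_closure_of_forall_inter_nonempty_iff
      fun U hU => hy ⟨U, hU⟩)

/-- Let `G` be a Polish group acting continuously on a Polish space `V` with locally closed
orbits, and let `(Y, ν)` be a nonzero σ-finite standard measure space with a measurable,
measure-class-preserving, ergodic action of a group `S` mapping to `G` by `ρ`. Then every
measurable a.e. equivariant map `φ : Y → V` essentially ranges in a single `G`-orbit. -/
theorem equivariant_map_into_single_orbit
    (G : Type*) [Group G] [TopologicalSpace G] [IsTopologicalGroup G] [PolishSpace G]
    (V : Type*) [TopologicalSpace V] [PolishSpace V]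
    [MeasurableSpace V] [BorelSpace V]
    [MulAction G V]
    (hGV : Continuous fun p : G × V => p.1 • p.2)
    (horb : ∀ v : V, IsLocallyClosed (MulAction.orbit G v))
    (S : Type*) [Group S] (ρ : S →* G)
    (Y : Type*) [MeasurableSpace Y] [StandardBorelSpace Y]
    (ν : Measure Y) [SigmaFinite ν] (hν : ν ≠ 0)
    [MulAction S Y]
    (hmeas : ∀ s : S, Measurable fun y : Y => s • y)
    (hqmp : ∀ s : S, Measure.QuasiMeasurePreserving (fun y : Y => s • y) ν ν)
    (herg : ∀ A : Set Y, MeasurableSet A →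
      (∀ s : S, ν (symmDiff ((fun y : Y => s • y) '' A) A) = 0) → ν A = 0 ∨ ν Aᶜ = 0)
    (φ : Y → V) (hφmeas : Measurable φ)
    (hφ : ∀ s : S, ∀ᵐ y ∂ν, φ (s • y) = ρ s • φ y) :
    ∃ v : V, ∀ᵐ y ∂ν, φ y ∈ MulAction.orbit G v :=
  equivariant_map_into_single_orbit_general G V hGV horb S ρ Y ν hν herg φ hφmeas hφ
end

section
/- Let k be an algebraically closed field, let K₀ ⊆ K be an extension of fields with K countable, and let j : K₀ → k be a ring homomorphism. Assume there exists an uncountable subset of k which is algebraically independent over the subfield j(K₀). Then there exists a ring homomorphism J : K → k with J restricted to K₀ equal to j. -/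
/-!
A countable field `K` has a countable transcendence basis `x` over `K₀`, which can be sent
injectively into the uncountable algebraically independent set `S`. This defines an embedding
of the polynomial ring `K₀[x]` into `k`, and since `K` is algebraic over `K₀[x]` and `k` is
algebraically closed, it extends to all of `K`.
-/

open MvPolynomial

theorem AlgebraicIndependent.of_fieldRange_algebraMap {F L ι : Type*} [Field F] [Field L]
    [Algebra F L] {y : ι → L} (hy : AlgebraicIndependent (algebraMap F L).fieldRange y) :
    AlgebraicIndependent F y :=
  hy.of_ringHom_of_comp_eq (algebraMap F L).rangeRestrictField (RingHom.id L)
    (algebraMap F L).rangeRestrictField.injective rfl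

theorem IsTranscendenceBasis.nonempty_algHom_of_algebraicIndependent {F K k ι : Type*}
    [CommRing F] [Nontrivial F] [CommRing K] [IsDomain K] [Field k] [IsAlgClosed k]
    [Algebra F K] [Algebra F k] {x : ι → K} (hx : IsTranscendenceBasis F x) {y : ι → k}
    (hy : AlgebraicIndependent F y) : Nonempty (K →ₐ[F] k) := by
  let R := Algebra.adjoin F (Set.range x)
  have : Algebra.IsAlgebraic R K := hx.isAlgebraic
  let φ : R →ₐ[F] k := (aeval y).comp hx.1.aevalEquiv.symm.toAlgHom
  have hφ : Function.Injective φ :=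
    (algebraicIndependent_iff_injective_aeval.1 hy).comp hx.1.aevalEquiv.symm.injective
  let : Algebra R k := φ.toAlgebra
  have : Module.IsTorsionFree R K :=
    Module.isTorsionFree_iff_algebraMap_injective.2 Subtype.val_injective
  have : Module.IsTorsionFree R k := Module.isTorsionFree_iff_algebraMap_injective.2 hφ
  have : IsScalarTower F R k := IsScalarTower.of_algebraMap_eq fun a => (φ.commutes a).symm
  exact ⟨(IsAlgClosed.lift : K →ₐ[R] k).restrictScalars F⟩

theorem AlgebraicIndependent.nonempty_algHom_of_countable {F K k ι : Type*} [CommRing F]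
    [CommRing K] [IsDomain K] [Countable K] [Field k] [IsAlgClosed k] [Algebra F K]
    [FaithfulSMul F K] [Algebra F k] [Infinite ι] {y : ι → k}
    (hy : AlgebraicIndependent F y) : Nonempty (K →ₐ[F] k) := by
  have : Nontrivial F := (algebraMap F K).domain_nontrivial
  obtain ⟨s, hs⟩ := exists_isTranscendenceBasis F K
  let e : s ↪ ι := (Classical.choice (nonempty_embedding_nat s)).trans (Infinite.natEmbedding ι)
  exact hs.nonempty_algHom_of_algebraicIndependent (hy.comp e e.injective)

/-- Let `k` be an algebraically closed field, `K₀ ⊆ K` an extension of fields with `K`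
countable, and `j : K₀ → k` a ring homomorphism. If `k` contains an uncountable subset
algebraically independent over `j(K₀)`, then `j` extends to a ring homomorphism `K → k`. -/
theorem extend_embedding_of_uncountable_transcendence
    (k : Type*) [Field k] [IsAlgClosed k]
    (K : Type*) [Field K] [Countable K]
    (K₀ : Subfield K)
    (j : K₀ →+* k)
    (htr : ∃ S : Set k, ¬ S.Countable ∧
      AlgebraicIndependent (j.fieldRange) ((↑) : S → k)) :
    ∃ J : K →+* k, ∀ x : K₀, J (x : K) = j x := by
  obtain ⟨S, hS, hSind⟩ := htr
  let : Algebra K₀ k := j.toAlgebra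
  have : Infinite S := Set.infinite_coe_iff.2 fun h => hS h.countable
  obtain ⟨J⟩ := (AlgebraicIndependent.of_fieldRange_algebraMap hSind).nonempty_algHom_of_countable
    (K := K)
  exact ⟨J, J.commutes⟩
end

section
/- Let T be a locally compact second countable group, let Γ ≤ T be a lattice, and let H ≤ T be an open subgroup. Then Γ ∩ H is a lattice in H. -/
/-!
The fundamental domain condition `∀ t, ∃! γ : Γ, γ⁻¹ * t ∈ F` says that `Γ` and `F` are
complements (`Subgroup.IsComplement`): every `t` is uniquely `γ * f`. If `R ⊆ Γ` is a set of
representatives of the right cosets of `Λ = Γ ∩ H` in `Γ`, then `Λ` is complemented by `R * F`, so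
`Γ ∩ H` is complemented in `H` by `H ∩ (R * F)`. Distinct elements of `R` lie in distinct right
cosets of `H`, so the sets `r⁻¹ H ∩ F` are disjoint and left invariance gives
`μ (H ∩ (R * F)) ≤ ∑ μ (r⁻¹ H ∩ F) ≤ μ F < ∞`. As `H` is open, `μ` restricts to a Haar measure
on `H`, of which `μH` is a multiple.
-/

open MeasureTheory Topology Set Pointwise Subgroup

/-- A discrete subgroup `Γ` of a lcsc group `T` is a *lattice* if it admits a Borel
fundamental domain of finite Haar measure. -/
def IsLattice (T : Type*) [Group T] [TopologicalSpace T] [MeasurableSpace T]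
    (μ : Measure T) (Γ : Subgroup T) : Prop :=
  DiscreteTopology Γ ∧
    ∃ F : Set T, MeasurableSet F ∧ μ F < ⊤ ∧ ∀ t : T, ∃! γ : Γ, (γ : T)⁻¹ * t ∈ F

section Transversal

variable {G : Type*} [Group G]

theorem Subgroup.IsComplement.trans_subgroupOf {Γ Λ : Subgroup G} (hΛ : Λ ≤ Γ) {R : Set Γ}
    {F : Set G} (hR : IsComplement (Λ.subgroupOf Γ : Set Γ) R) (hF : IsComplement (Γ : Set G) F) :
    IsComplement (Λ : Set G) (((↑) '' R) * F) := by
  rw [isComplement_iff_existsUnique_inv_mul_mem] at hR hF ⊢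
  intro g
  obtain ⟨γ, hγF, hγ_unique⟩ := hF g
  obtain ⟨l, hlR, hl_unique⟩ := hR γ
  refine ⟨⟨l.1, l.2⟩, ⟨_, ⟨_, hlR, rfl⟩, _, hγF, by simp [mul_assoc]⟩, ?_⟩
  rintro m ⟨_, ⟨r, hr, rfl⟩, f, hf, hmrf⟩
  have hmr : (⟨m, hΛ m.2⟩ : Γ) * r = γ := hγ_unique _ <| by
    simp only at hmrf
    simpa [mul_inv_rev, mul_assoc, ← hmrf] using hf
  have hm : (⟨⟨m, hΛ m.2⟩, m.2⟩ : Λ.subgroupOf Γ) = l := hl_unique _ <| by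
    simpa [← hmr] using hr
  ext
  simp [← hm]

theorem Subgroup.IsComplement.preimage_subtype {Λ H : Subgroup G} (hΛ : Λ ≤ H) {E : Set G}
    (hE : IsComplement (Λ : Set G) E) :
    IsComplement (Λ.subgroupOf H : Set H) ((↑) ⁻¹' E) := by
  rw [isComplement_iff_existsUnique_inv_mul_mem] at hE ⊢
  intro h
  obtain ⟨l, hlE, hl_unique⟩ := hE h
  refine ⟨⟨⟨l, hΛ l.2⟩, l.2⟩, hlE, fun m hm ↦ ?_⟩
  have hm_eq := hl_unique ⟨m.1.1, m.2⟩ hm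
  ext
  simp [← hm_eq]

theorem Subgroup.IsComplement.eq_of_mul_inv_mem {K : Subgroup G} {R : Set G}
    (hR : IsComplement (K : Set G) R) {r r' : G} (hr : r ∈ R) (hr' : r' ∈ R)
    (h : r * r'⁻¹ ∈ K) : r = r' := by
  obtain ⟨t, -, ht_unique⟩ := isComplement_iff_existsUnique_mul_inv_mem.mp hR r
  have h₁ := ht_unique ⟨r, hr⟩ (by simp)
  have h₂ := ht_unique ⟨r', hr'⟩ h
  exact congrArg Subtype.val (h₁.trans h₂.symm)

end Transversal

section Measure

variable {G : Type*} [Group G] [MeasurableSpace G] [MeasurableMul G]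

theorem Set.Countable.measurableSet_mul {R F : Set G} (hR : R.Countable) (hF : MeasurableSet F) :
    MeasurableSet (R * F) := by
  rw [← iUnion_mul_left_image]
  exact .biUnion hR fun r _ ↦ hF.const_smul r

theorem Subgroup.measure_inter_mul_le (μ : Measure G) [μ.IsMulLeftInvariant] {H : Subgroup G}
    (hH : MeasurableSet (H : Set G)) {R : Set G} (hR_countable : R.Countable)
    (hR : ∀ r ∈ R, ∀ r' ∈ R, r * r'⁻¹ ∈ H → r = r') {F : Set G} (hF : MeasurableSet F) :
    μ ((H : Set G) ∩ (R * F)) ≤ μ F := by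
  have hdisj : R.PairwiseDisjoint fun r ↦ r⁻¹ • (H : Set G) ∩ F := by
    intro r hr r' hr' hne
    refine Set.disjoint_left.mpr fun x hx hx' ↦ hne (hR r hr r' hr' ?_)
    simp only [mem_inter_iff, mem_inv_smul_set_iff, smul_eq_mul, SetLike.mem_coe] at hx hx'
    simpa [mul_assoc] using H.mul_mem hx.1 (H.inv_mem hx'.1)
  calc μ ((H : Set G) ∩ (R * F))
      = μ (⋃ r ∈ R, r • (r⁻¹ • (H : Set G) ∩ F)) := by
        simp only [smul_set_inter, smul_inv_smul, ← inter_iUnion₂, iUnion_smul_set, smul_eq_mul]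
    _ ≤ ∑' r : R, μ ((r : G) • ((r : G)⁻¹ • (H : Set G) ∩ F)) := measure_biUnion_le μ hR_countable _
    _ = ∑' r : R, μ ((r : G)⁻¹ • (H : Set G) ∩ F) := by simp only [measure_smul]
    _ = μ (⋃ r ∈ R, r⁻¹ • (H : Set G) ∩ F) :=
        (measure_biUnion hR_countable hdisj fun r _ ↦ (hH.const_smul _).inter hF).symm
    _ ≤ μ F := measure_mono (iUnion₂_subset fun _ _ ↦ inter_subset_right)

end Measure

theorem Subgroup.discreteTopology_subgroupOf {G : Type*} [Group G] [TopologicalSpace G]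
    {Γ : Subgroup G} [DiscreteTopology Γ] (H : Subgroup G) : DiscreteTopology (Γ.subgroupOf H) :=
  DiscreteTopology.of_continuous_injective (f := fun x : Γ.subgroupOf H ↦ (⟨x.1.1, x.2⟩ : Γ))
    (by fun_prop) fun x y hxy ↦ by ext; simpa using congrArg Subtype.val hxy

theorem Subgroup.measure_lt_top_of_measure_image_lt_top {G : Type*} [Group G] [TopologicalSpace G]
    [IsTopologicalGroup G] [LocallyCompactSpace G] [SecondCountableTopology G] [MeasurableSpace G]
    [BorelSpace G] (μ : Measure G) [μ.IsHaarMeasure] {H : Subgroup G} (hH : IsOpen (H : Set G))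
    (μH : Measure H) [μH.IsHaarMeasure] {s : Set H} (hs : μ ((↑) '' s) < ⊤) : μH s < ⊤ := by
  have : LocallyCompactSpace H := hH.locallyCompactSpace
  have : SecondCountableTopology H := IsEmbedding.subtypeVal.secondCountableTopology
  have hH_emb : IsOpenEmbedding H.subtype := hH.isOpenEmbedding_subtypeVal
  have : (μ.comap H.subtype).IsHaarMeasure :=
    Measure.IsHaarMeasure.comap (mH := inferInstance) μ hH_emb
  rw [Measure.isMulLeftInvariant_eq_smul μH (μ.comap H.subtype), Measure.smul_apply,
    hH_emb.measurableEmbedding.comap_apply]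
  exact ENNReal.mul_lt_top ENNReal.coe_lt_top hs

/-- If `Γ` is a lattice in a lcsc group `T` and `H ≤ T` is an open subgroup, then `Γ ∩ H`
is a lattice in `H`. -/
theorem lattice_inter_open_subgroup
    (T : Type*) [Group T] [TopologicalSpace T] [IsTopologicalGroup T]
    [LocallyCompactSpace T] [SecondCountableTopology T]
    [MeasurableSpace T] [BorelSpace T]
    (μ : Measure T) [μ.IsHaarMeasure]
    (Γ : Subgroup T) (hΓ : IsLattice T μ Γ)
    (H : Subgroup T) (hH : IsOpen (H : Set T))
    (μH : Measure H) [μH.IsHaarMeasure] :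
    IsLattice H μH (Γ.subgroupOf H) := by
  obtain ⟨hΓ_discrete, F, hF_meas, hF_fin, hF⟩ := hΓ
  replace hF : IsComplement (Γ : Set T) F := isComplement_iff_existsUnique_inv_mul_mem.mpr hF
  have : Countable Γ := TopologicalSpace.separableSpace_iff_countable.mp inferInstance
  obtain ⟨R, hR, -⟩ := (H.subgroupOf Γ).exists_isComplement_right 1
  have hR_countable : (((↑) : Γ → T) '' R).Countable := R.to_countable.image _
  have hR_sep : ∀ r ∈ ((↑) : Γ → T) '' R, ∀ r' ∈ ((↑) : Γ → T) '' R, r * r'⁻¹ ∈ H → r = r' := by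
    rintro _ ⟨r, hr, rfl⟩ _ ⟨r', hr', rfl⟩ h
    exact congrArg Subtype.val (hR.eq_of_mul_inv_mem hr hr' h)
  rw [← inf_subgroupOf_left] at hR
  have hE := (hR.trans_subgroupOf inf_le_left hF).preimage_subtype inf_le_right
  rw [inf_subgroupOf_right] at hE
  refine ⟨discreteTopology_subgroupOf H, _,
    measurable_subtype_coe (hR_countable.measurableSet_mul hF_meas), ?_,
    isComplement_iff_existsUnique_inv_mul_mem.mp hE⟩
  refine H.measure_lt_top_of_measure_image_lt_top μ hH μH ?_
  rw [image_preimage_eq_inter_range, Subtype.range_coe, inter_comm]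
  exact (H.measure_inter_mul_le μ hH.measurableSet hR_countable hR_sep hF_meas).trans_lt hF_fin
end

section
/- Let G be a group acting by homeomorphisms on a topological space V such that every orbit G·v is locally closed in V. Then the orbit space V/G, equipped with the quotient topology, is a T0 topological space. -/
open MulAction Set Topology

/-! Every orbit `G • v` is a fibre of the quotient map, and that map is open for an action by
homeomorphisms, so local closedness descends from the orbits to the points of `V/G`; a space whose
points are locally closed is T0. -/

section LocallyClosed

variable {X Y : Type*} [TopologicalSpace X] [TopologicalSpace Y]

theorem t0Space_of_isLocallyClosed_singleton (h : ∀ x : X, IsLocallyClosed ({x} : Set X)) :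
    T0Space X := by
  refine (t0Space_iff_inseparable X).mpr fun x y hxy => ?_
  have hy_coborder : y ∈ coborder {x} :=
    (hxy.mem_open_iff (isLocallyClosed_iff_isOpen_coborder.mp (h x))).mp (subset_coborder rfl)
  have hy_closure : y ∈ closure {x} := specializes_iff_mem_closure.mp hxy.specializes
  exact (closure_inter_coborder (s := {x}).subset ⟨hy_closure, hy_coborder⟩).symm

theorem IsOpenQuotientMap.isLocallyClosed_of_preimage {f : X → Y} (hf : IsOpenQuotientMap f)
    {s : Set Y} (hs : IsLocallyClosed (f ⁻¹' s)) : IsLocallyClosed s := by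
  rw [isLocallyClosed_iff_isOpen_coborder, coborder_preimage hf.isOpenMap hf.continuous] at hs
  exact isLocallyClosed_iff_isOpen_coborder.mpr (hf.isQuotientMap.isOpen_preimage.mp hs)

end LocallyClosed

theorem MulAction.preimage_quotientMk_singleton {G V : Type*} [Group G] [MulAction G V] (v : V) :
    Quotient.mk (orbitRel G V) ⁻¹' {Quotient.mk (orbitRel G V) v} = orbit G v := by
  ext w
  simp only [mem_preimage, mem_singleton_iff, Quotient.eq, orbitRel_apply]

/-- If a group `G` acts by homeomorphisms on a topological space `V` with all orbits locally
closed, then the orbit space `V/G` with the quotient topology is T0. -/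
theorem orbit_space_t0_of_locally_closed_orbits
    (G : Type*) [Group G]
    (V : Type*) [TopologicalSpace V] [MulAction G V]
    (hcont : ∀ g : G, Continuous fun v : V => g • v)
    (horb : ∀ v : V, IsLocallyClosed (MulAction.orbit G v)) :
    T0Space (Quotient (MulAction.orbitRel G V)) := by
  have : ContinuousConstSMul G V := ⟨hcont⟩
  refine t0Space_of_isLocallyClosed_singleton fun q => ?_
  induction q using Quotient.inductionOn with | _ v =>
  refine isOpenQuotientMap_quotientMk.isLocallyClosed_of_preimage ?_
  rw [preimage_quotientMk_singleton]
  exact horb v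
end
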